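/- arXiv:2105.13517 — 2 statements merged into one kernel-verified Lean document; each statement's English description precedes it below -/
import Mathlib

section
/- (Weak duality for the reformulated Benders subproblem.) Let q_{ν_i,c_i}, i = 0,…,I, be cuts with ν_0 = 0 and c_0 = 0, and let G(s_0,…,s_{N−1}) := ENNReal.ofReal( max_{i=0,…,I} q_{ν_i,c_i}(s_0,…,s_{N−1}) ). Let ν ∈ ℝ^n, μ ∈ ℝ^{nc} with μ ≥ 0 componentwise, and λ ∈ ℝ^{I+1} with λ ≥ 0 componentwise and ∑_{i=0}^{I} λ_i = γ. Suppose ξ ∈ ℝ satisfies, for all x' ∈ ℝ^n, u' ∈ ℝ^m, δ' ∈ {0,1}^{nδ}, z' ∈ ℝ^{nz}: ξ ≤ μᵀ(E2 δ' + E3 z' − E1 u' − E4 x') + (γ^N/2)(x'−x_g)ᵀQ(x'−x_g) + (γ^N/2)(u'−u_g)ᵀR(u'−u_g) + (∑_{i=0}^{I} λ_i ν_i)ᵀ(A x' + B1 u' + B2 δ' + B3 z') − νᵀ x'. Set c' := ∑_{i=0}^{I} λ_i c_i − μᵀ E5 + ξ. Then for every x ∈ ℝ^n and every (s_0,…,s_{N−1})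 ∈ S^(N)(x), ENNReal.ofReal( q_{ν,c'}(s_0,…,s_{N−1}) ) ≤ (T G)(s_0,…,s_{N−1}). -/
open Matrix
open scoped ENNReal

/-- Data of a mixed logical dynamical (MLD) system. -/
structure MLD (n m nδ nz nc : ℕ) where
  A : Matrix (Fin n) (Fin n) ℝ
  B1 : Matrix (Fin n) (Fin m) ℝ
  B2 : Matrix (Fin n) (Fin nδ) ℝ
  B3 : Matrix (Fin n) (Fin nz) ℝ
  E1 : Matrix (Fin nc) (Fin m) ℝ
  E2 : Matrix (Fin nc) (Fin nδ) ℝ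
  E3 : Matrix (Fin nc) (Fin nz) ℝ
  E4 : Matrix (Fin nc) (Fin n) ℝ
  E5 : Fin nc → ℝ

/-- Cost data: quadratic stage cost matrices, goal pair and discount factor. -/
structure CostData (n m : ℕ) where
  Q : Matrix (Fin n) (Fin n) ℝ
  R : Matrix (Fin m) (Fin m) ℝ
  xg : Fin n → ℝ
  ug : Fin m → ℝ
  γ : ℝ

/-- A tuple s = (x, u, δ, z). -/
abbrev Tup (n m nδ nz : ℕ) :=
  (Fin n → ℝ) × (Fin m → ℝ) × (Fin nδ → ℝ) × (Fin nz → ℝ)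

namespace MLD

variable {n m nδ nz nc : ℕ}

/-- Admissibility constraints: δ is binary and the MLD inequality holds. -/
def Feas (M : MLD n m nδ nz nc) (s : Tup n m nδ nz) : Prop :=
  (∀ j, s.2.2.1 j = 0 ∨ s.2.2.1 j = 1) ∧
  ∀ i, (M.E2.mulVec s.2.2.1 + M.E3.mulVec s.2.2.2) i ≤
       (M.E4.mulVec s.1 + M.E1.mulVec s.2.1 + M.E5) i

/-- s ∈ S(x): the tuple s is admissible at x. -/
def inS (M : MLD n m nδ nz nc) (x : Fin n → ℝ) (s : Tup n m nδ nz) : Prop :=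
  s.1 = x ∧ M.Feas s

/-- Successor state f(s) = A x + B1 u + B2 δ + B3 z. -/
def step (M : MLD n m nδ nz nc) (s : Tup n m nδ nz) : Fin n → ℝ :=
  M.A.mulVec s.1 + M.B1.mulVec s.2.1 + M.B2.mulVec s.2.2.1 + M.B3.mulVec s.2.2.2

/-- Feasible infinite trajectory from x. -/
def Traj (M : MLD n m nδ nz nc) (x : Fin n → ℝ) (τ : ℕ → Tup n m nδ nz) : Prop :=
  (τ 0).1 = x ∧ (∀ t, M.Feas (τ t)) ∧ ∀ t, (τ (t + 1)).1 = M.step (τ t)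

/-- σ ∈ S^(N)(x): N-step feasible trajectory starting at x. -/
def TrajN (M : MLD n m nδ nz nc) {N : ℕ} (x : Fin n → ℝ)
    (σ : Fin N → Tup n m nδ nz) : Prop :=
  (∀ k : Fin N, (k : ℕ) = 0 → (σ k).1 = x) ∧
  (∀ k, M.Feas (σ k)) ∧
  ∀ (k : ℕ) (h : k + 1 < N), (σ ⟨k + 1, h⟩).1 = M.step (σ ⟨k, Nat.lt_of_succ_lt h⟩)

/-- x_N = f(s_{N-1}): the state reached after the N-step trajectory. -/
def lastState (M : MLD n m nδ nz nc) {N : ℕ} (hN : 0 < N)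
    (σ : Fin N → Tup n m nδ nz) : Fin n → ℝ :=
  M.step (σ ⟨N - 1, Nat.sub_lt hN one_pos⟩)

end MLD

noncomputable section

/-- Quadratic stage cost ℓ(x,u). -/
def stageCost {n m : ℕ} (C : CostData n m) (x : Fin n → ℝ) (u : Fin m → ℝ) : ℝ :=
  (1 / 2) * ((x - C.xg) ⬝ᵥ C.Q.mulVec (x - C.xg)) +
  (1 / 2) * ((u - C.ug) ⬝ᵥ C.R.mulVec (u - C.ug))

/-- Total discounted cost of an infinite trajectory, in [0, ∞]. -/
def trajCost {n m nδ nz : ℕ} (C : CostData n m) (τ : ℕ → Tup n m nδ nz) : ℝ≥0∞ :=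
  ∑' t : ℕ, ENNReal.ofReal (C.γ ^ t * stageCost C (τ t).1 (τ t).2.1)

/-- Optimal value function V★. -/
def Vstar {n m nδ nz nc : ℕ} (M : MLD n m nδ nz nc) (C : CostData n m)
    (x : Fin n → ℝ) : ℝ≥0∞ :=
  ⨅ τ : {τ : ℕ → Tup n m nδ nz // M.Traj x τ}, trajCost C τ.1

/-- Optimal N-step Q-function Q^(N)★: infimum of total cost over all feasible infinite
trajectories (from the trajectory's own initial state) whose first N elements are σ. -/
def QNstar {n m nδ nz nc : ℕ} (M : MLD n m nδ nz nc) (C : CostData n m) {N : ℕ}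
    (σ : Fin N → Tup n m nδ nz) : ℝ≥0∞ :=
  ⨅ τ : {τ : ℕ → Tup n m nδ nz // M.Traj (τ 0).1 τ ∧ ∀ k : Fin N, τ (k : ℕ) = σ k},
    trajCost C τ.1

/-- The shifted trajectory (s_1, …, s_N) obtained by appending s_N. -/
def shiftAppend {n m nδ nz : ℕ} {N : ℕ} (σ : Fin N → Tup n m nδ nz)
    (sN : Tup n m nδ nz) : Fin N → Tup n m nδ nz :=
  fun k => if h : (k : ℕ) + 1 < N then σ ⟨(k : ℕ) + 1, h⟩ else sN

/-- The N-step Bellman operator T. -/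
def bellman {n m nδ nz nc : ℕ} (M : MLD n m nδ nz nc) (C : CostData n m)
    {N : ℕ} (hN : 0 < N) (G : (Fin N → Tup n m nδ nz) → ℝ≥0∞)
    (σ : Fin N → Tup n m nδ nz) : ℝ≥0∞ :=
  ENNReal.ofReal (stageCost C (σ ⟨0, hN⟩).1 (σ ⟨0, hN⟩).2.1) +
  ENNReal.ofReal C.γ *
    ⨅ sN : {s : Tup n m nδ nz // M.inS (M.lastState hN σ) s}, G (shiftAppend σ sN.1)

/-- A Benders cut q_{ν,c}. -/
def cutFun {n m nδ nz nc : ℕ} (M : MLD n m nδ nz nc) (C : CostData n m)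
    {N : ℕ} (hN : 0 < N) (ν : Fin n → ℝ) (c : ℝ)
    (σ : Fin N → Tup n m nδ nz) : ℝ :=
  (∑ t : Fin N, C.γ ^ (t : ℕ) * stageCost C (σ t).1 (σ t).2.1) +
  ν ⬝ᵥ M.lastState hN σ + c

end

/-! Fix an admissible successor `s_N` of `x_N`. Since `∑ λᵢ = γ`, the combination
`ℓ(x₀,u₀) + ∑ λᵢ qᵢ(s₁,…,s_N)` is at most `ℓ(x₀,u₀) + γ · maxᵢ qᵢ(s₁,…,s_N)`, and it equals the
`N`-step discounted cost plus `γ^N ℓ(s_N) + (∑ λᵢ νᵢ)ᵀ f(s_N) + ∑ λᵢ cᵢ`. Pairing `μ ≥ 0` with the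
constraint `E₂δ + E₃z ≤ E₄x + E₁u + E₅` of `s_N` turns the hypothesis on `ξ` into exactly the
upper bound on `ξ` that makes `q_{ν,c'}(s₀,…,s_{N-1})` smaller than this combination. -/

lemma le_bellman_of_forall {n m nδ nz nc N : ℕ} {M : MLD n m nδ nz nc} {C : CostData n m}
    (hγ : 0 < C.γ) (hN : 0 < N) {G : (Fin N → Tup n m nδ nz) → ℝ≥0∞}
    {σ : Fin N → Tup n m nδ nz} {a : ℝ≥0∞}
    (h : ∀ s, M.inS (M.lastState hN σ) s →
      a ≤ ENNReal.ofReal (stageCost C (σ ⟨0, hN⟩).1 (σ ⟨0, hN⟩).2.1) +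
        ENNReal.ofReal C.γ * G (shiftAppend σ s)) :
    a ≤ bellman M C hN G σ := by
  rw [bellman, ENNReal.mul_iInf_of_ne (ENNReal.ofReal_pos.mpr hγ).ne' ENNReal.ofReal_ne_top,
    ENNReal.add_iInf]
  exact le_iInf fun s => h s.1 s.2

lemma MLD.Feas.dotProduct_le {n m nδ nz nc : ℕ} {M : MLD n m nδ nz nc} {s : Tup n m nδ nz}
    (hs : M.Feas s) {μ : Fin nc → ℝ} (hμ : ∀ j, 0 ≤ μ j) :
    μ ⬝ᵥ (M.E2 *ᵥ s.2.2.1 + M.E3 *ᵥ s.2.2.2 - M.E1 *ᵥ s.2.1 - M.E4 *ᵥ s.1) ≤ μ ⬝ᵥ M.E5 := by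
  refine dotProduct_le_dotProduct_of_nonneg_left (fun j => ?_) hμ
  have := hs.2 j
  simp only [Pi.add_apply, Pi.sub_apply] at this ⊢
  linarith

section shiftAppend

variable {n m nδ nz : ℕ}

lemma shiftAppend_castSucc {K : ℕ} (σ : Fin (K + 1) → Tup n m nδ nz) (s : Tup n m nδ nz)
    (t : Fin K) : shiftAppend σ s t.castSucc = σ t.succ := by
  simp [shiftAppend, Fin.succ]

lemma shiftAppend_last {K : ℕ} (σ : Fin (K + 1) → Tup n m nδ nz) (s : Tup n m nδ nz) :
    shiftAppend σ s (Fin.last K) = s := by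
  simp [shiftAppend]

lemma MLD.lastState_shiftAppend {nc N : ℕ} (M : MLD n m nδ nz nc) (hN : 0 < N)
    (σ : Fin N → Tup n m nδ nz) (s : Tup n m nδ nz) :
    M.lastState hN (shiftAppend σ s) = M.step s := by
  rw [MLD.lastState, shiftAppend, dif_neg (by rw [Fin.val_mk]; omega)]

lemma sum_pow_mul_shiftAppend {N : ℕ} (hN : 0 < N) (γ : ℝ) (f : Tup n m nδ nz → ℝ)
    (σ : Fin N → Tup n m nδ nz) (s : Tup n m nδ nz) :
    f (σ ⟨0, hN⟩) + γ * ∑ t : Fin N, γ ^ (t : ℕ) * f (shiftAppend σ s t) =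
      (∑ t : Fin N, γ ^ (t : ℕ) * f (σ t)) + γ ^ N * f s := by
  obtain ⟨K, rfl⟩ : ∃ K, N = K + 1 := ⟨N - 1, by omega⟩
  rw [Fin.sum_univ_castSucc, Fin.sum_univ_succ]
  simp only [shiftAppend_castSucc, shiftAppend_last, Fin.val_last, Fin.val_castSucc,
    Fin.val_succ, Fin.val_zero, pow_zero, one_mul, mul_add, Finset.mul_sum, pow_succ', mul_assoc]
  rw [Fin.mk_zero]
  ring

end shiftAppend

lemma sum_mul_cutFun {n m nδ nz nc N I : ℕ} (M : MLD n m nδ nz nc) (C : CostData n m)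
    (hN : 0 < N) (lam : Fin I → ℝ) (νs : Fin I → Fin n → ℝ) (cs : Fin I → ℝ)
    (σ : Fin N → Tup n m nδ nz) :
    ∑ i, lam i * cutFun M C hN (νs i) (cs i) σ =
      (∑ i, lam i) * ∑ t : Fin N, C.γ ^ (t : ℕ) * stageCost C (σ t).1 (σ t).2.1 +
        (∑ i, lam i • νs i) ⬝ᵥ M.lastState hN σ + ∑ i, lam i * cs i := by
  simp only [cutFun, sum_dotProduct, smul_dotProduct, smul_eq_mul, Finset.sum_mul,
    ← Finset.sum_add_distrib, mul_add]

lemma Finset.sum_mul_le_sum_mul_sup' {ι : Type*} {s : Finset ι} (hs : s.Nonempty)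
    {w f : ι → ℝ} (hw : ∀ i ∈ s, 0 ≤ w i) :
    ∑ i ∈ s, w i * f i ≤ (∑ i ∈ s, w i) * s.sup' hs f := by
  rw [Finset.sum_mul]
  exact Finset.sum_le_sum fun i hi => mul_le_mul_of_nonneg_left (s.le_sup' f hi) (hw i hi)

theorem benders_weak_duality_general {n m nδ nz nc : ℕ} (M : MLD n m nδ nz nc)
    (C : CostData n m) (hγ0 : 0 < C.γ) {N : ℕ} (hN : 0 < N) (I : ℕ)
    (νs : Fin (I + 1) → (Fin n → ℝ)) (cs : Fin (I + 1) → ℝ)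
    (ν : Fin n → ℝ) (μ : Fin nc → ℝ) (hμ : ∀ j, 0 ≤ μ j)
    (lam : Fin (I + 1) → ℝ) (hlam : ∀ i, 0 ≤ lam i) (hlamsum : ∑ i, lam i = C.γ)
    (ξ : ℝ)
    (hξ : ∀ (x' : Fin n → ℝ) (u' : Fin m → ℝ) (δ' : Fin nδ → ℝ) (z' : Fin nz → ℝ),
      (∀ j, δ' j = 0 ∨ δ' j = 1) →
      ξ ≤ μ ⬝ᵥ (M.E2.mulVec δ' + M.E3.mulVec z' - M.E1.mulVec u' - M.E4.mulVec x')
        + (C.γ ^ N / 2) * ((x' - C.xg) ⬝ᵥ C.Q.mulVec (x' - C.xg))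
        + (C.γ ^ N / 2) * ((u' - C.ug) ⬝ᵥ C.R.mulVec (u' - C.ug))
        + (∑ i, lam i • νs i) ⬝ᵥ
            (M.A.mulVec x' + M.B1.mulVec u' + M.B2.mulVec δ' + M.B3.mulVec z')
        - ν ⬝ᵥ x')
    (c' : ℝ) (hc' : c' = (∑ i, lam i * cs i) - μ ⬝ᵥ M.E5 + ξ)
    (σ : Fin N → Tup n m nδ nz) :
    ENNReal.ofReal (cutFun M C hN ν c' σ) ≤
      bellman M C hN
        (fun σ' => ENNReal.ofReal (Finset.univ.sup' Finset.univ_nonempty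
          fun i : Fin (I + 1) => cutFun M C hN (νs i) (cs i) σ')) σ := by
  refine le_bellman_of_forall hγ0 hN fun s ⟨hsx, hs⟩ => ?_
  set σ' := shiftAppend σ s
  set ℓ₀ := stageCost C (σ ⟨0, hN⟩).1 (σ ⟨0, hN⟩).2.1
  have hdual : ξ ≤ μ ⬝ᵥ M.E5 + C.γ ^ N * stageCost C s.1 s.2.1
      + (∑ i, lam i • νs i) ⬝ᵥ M.step s - ν ⬝ᵥ s.1 := by
    have := hξ s.1 s.2.1 s.2.2.1 s.2.2.2 hs.1
    rw [stageCost, MLD.step]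
    linarith [hs.dotProduct_le hμ]
  have hcost := sum_pow_mul_shiftAppend hN C.γ (fun s => stageCost C s.1 s.2.1) σ s
  have hcut : cutFun M C hN ν c' σ ≤ ℓ₀ + ∑ i, lam i * cutFun M C hN (νs i) (cs i) σ' := by
    rw [sum_mul_cutFun, hlamsum, MLD.lastState_shiftAppend, cutFun, hc', ← hsx]
    linarith
  calc ENNReal.ofReal (cutFun M C hN ν c' σ)
      ≤ ENNReal.ofReal (ℓ₀ + C.γ * Finset.univ.sup' Finset.univ_nonempty
          fun i => cutFun M C hN (νs i) (cs i) σ') := by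
        rw [← hlamsum]
        exact ENNReal.ofReal_le_ofReal <| hcut.trans <| add_le_add_right
          (Finset.sum_mul_le_sum_mul_sup' _ fun i _ => hlam i) _
    _ ≤ _ := ENNReal.ofReal_add_le
    _ = _ := by rw [ENNReal.ofReal_mul hγ0.le]

/-- weak duality for the reformulated Benders subproblem. -/
theorem benders_weak_duality {n m nδ nz nc : ℕ} (M : MLD n m nδ nz nc)
    (C : CostData n m) (hQ : C.Q.PosDef) (hR : C.R.PosDef)
    (hγ0 : 0 < C.γ) (hγ1 : C.γ ≤ 1) {N : ℕ} (hN : 0 < N) (I : ℕ)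
    (νs : Fin (I + 1) → (Fin n → ℝ)) (cs : Fin (I + 1) → ℝ)
    (hν0 : νs 0 = 0) (hc0 : cs 0 = 0)
    (ν : Fin n → ℝ) (μ : Fin nc → ℝ) (hμ : ∀ j, 0 ≤ μ j)
    (lam : Fin (I + 1) → ℝ) (hlam : ∀ i, 0 ≤ lam i) (hlamsum : ∑ i, lam i = C.γ)
    (ξ : ℝ)
    (hξ : ∀ (x' : Fin n → ℝ) (u' : Fin m → ℝ) (δ' : Fin nδ → ℝ) (z' : Fin nz → ℝ),
      (∀ j, δ' j = 0 ∨ δ' j = 1) →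
      ξ ≤ μ ⬝ᵥ (M.E2.mulVec δ' + M.E3.mulVec z' - M.E1.mulVec u' - M.E4.mulVec x')
        + (C.γ ^ N / 2) * ((x' - C.xg) ⬝ᵥ C.Q.mulVec (x' - C.xg))
        + (C.γ ^ N / 2) * ((u' - C.ug) ⬝ᵥ C.R.mulVec (u' - C.ug))
        + (∑ i, lam i • νs i) ⬝ᵥ
            (M.A.mulVec x' + M.B1.mulVec u' + M.B2.mulVec δ' + M.B3.mulVec z')
        - ν ⬝ᵥ x')
    (c' : ℝ) (hc' : c' = (∑ i, lam i * cs i) - μ ⬝ᵥ M.E5 + ξ)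
    (x : Fin n → ℝ) (σ : Fin N → Tup n m nδ nz) (hσ : M.TrajN x σ) :
    ENNReal.ofReal (cutFun M C hN ν c' σ) ≤
      bellman M C hN
        (fun σ' => ENNReal.ofReal (Finset.univ.sup' Finset.univ_nonempty
          fun i : Fin (I + 1) => cutFun M C hN (νs i) (cs i) σ')) σ :=
  benders_weak_duality_general M C hγ0 hN I νs cs ν μ hμ lam hlam hlamsum ξ hξ c' hc' σ
end

section
/- (Lemma 1: the new Benders cut globally lower bounds the optimal N-step Q-function.) Let q_{ν_i,c_i}, i = 0,…,I, be cuts with ν_0 = 0 and c_0 = 0 such that each one lower bounds Q^(N)★, i.e. ENNReal.ofReal( q_{ν_i,c_i}(s) ) ≤ Q^(N)★(s) for every x ∈ ℝ^n and every s ∈ S^(N)(x). Let ν ∈ ℝ^n, μ ∈ ℝ^{nc} with μ ≥ 0 componentwise, and λ ∈ ℝ^{I+1} with λ ≥ 0 componentwise and ∑_{i=0}^{I} λ_i = γ. Suppose ξ ∈ ℝ satisfies, for all x' ∈ ℝ^n, u' ∈ ℝ^m, δ' ∈ {0,1}^{nδ}, z' ∈ ℝ^{nz}: ξ ≤ μᵀ(E2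 δ' + E3 z' − E1 u' − E4 x') + (γ^N/2)(x'−x_g)ᵀQ(x'−x_g) + (γ^N/2)(u'−u_g)ᵀR(u'−u_g) + (∑_{i=0}^{I} λ_i ν_i)ᵀ(A x' + B1 u' + B2 δ' + B3 z') − νᵀ x'. Define c' := ∑_{i=0}^{I} λ_i c_i − μᵀ E5 + ξ. Then the new cut q_{ν,c'} also lower bounds Q^(N)★: for every x ∈ ℝ^n and every (s_0,…,s_{N−1}) ∈ S^(N)(x), ENNReal.ofReal( q_{ν,c'}(s_0,…,s_{N−1}) ) ≤ Q^(N)★(s_0,…,s_{N−1}). -/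
open Matrix
open scoped ENNReal

lemma ofReal_sum_le_aux {α : Type*} (s : Finset α) (f : α → ℝ) :
    ENNReal.ofReal (∑ i ∈ s, f i) ≤ ∑ i ∈ s, ENNReal.ofReal (f i) := by
  induction s using Finset.cons_induction with
  | empty => simp
  | cons a s ha ih =>
    rw [Finset.sum_cons, Finset.sum_cons]
    exact ENNReal.ofReal_add_le.trans (add_le_add le_rfl ih)

/-- Lemma 1: the new Benders cut globally lower bounds Q^(N)★. -/
theorem benders_new_cut_lower_bounds_QNstar {n m nδ nz nc : ℕ} (M : MLD n m nδ nz nc)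
    (C : CostData n m) (hQ : C.Q.PosDef) (hR : C.R.PosDef)
    (hγ0 : 0 < C.γ) (hγ1 : C.γ ≤ 1) {N : ℕ} (hN : 0 < N) (I : ℕ)
    (νs : Fin (I + 1) → (Fin n → ℝ)) (cs : Fin (I + 1) → ℝ)
    (hν0 : νs 0 = 0) (hc0 : cs 0 = 0)
    (hcuts : ∀ (i : Fin (I + 1)) (x : Fin n → ℝ) (σ : Fin N → Tup n m nδ nz),
      M.TrajN x σ → ENNReal.ofReal (cutFun M C hN (νs i) (cs i) σ) ≤ QNstar M C σ)
    (ν : Fin n → ℝ) (μ : Fin nc → ℝ) (hμ : ∀ j, 0 ≤ μ j)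
    (lam : Fin (I + 1) → ℝ) (hlam : ∀ i, 0 ≤ lam i) (hlamsum : ∑ i, lam i = C.γ)
    (ξ : ℝ)
    (hξ : ∀ (x' : Fin n → ℝ) (u' : Fin m → ℝ) (δ' : Fin nδ → ℝ) (z' : Fin nz → ℝ),
      (∀ j, δ' j = 0 ∨ δ' j = 1) →
      ξ ≤ μ ⬝ᵥ (M.E2.mulVec δ' + M.E3.mulVec z' - M.E1.mulVec u' - M.E4.mulVec x')
        + (C.γ ^ N / 2) * ((x' - C.xg) ⬝ᵥ C.Q.mulVec (x' - C.xg))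
        + (C.γ ^ N / 2) * ((u' - C.ug) ⬝ᵥ C.R.mulVec (u' - C.ug))
        + (∑ i, lam i • νs i) ⬝ᵥ
            (M.A.mulVec x' + M.B1.mulVec u' + M.B2.mulVec δ' + M.B3.mulVec z')
        - ν ⬝ᵥ x')
    (c' : ℝ) (hc' : c' = (∑ i, lam i * cs i) - μ ⬝ᵥ M.E5 + ξ) :
    ∀ (x : Fin n → ℝ) (σ : Fin N → Tup n m nδ nz), M.TrajN x σ →
      ENNReal.ofReal (cutFun M C hN ν c' σ) ≤ QNstar M C σ := by
  intro x σ hσ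
  obtain ⟨N', rfl⟩ : ∃ N', N = N' + 1 := ⟨N - 1, (Nat.succ_pred_eq_of_pos hN).symm⟩
  refine le_iInf ?_
  rintro ⟨τ, hτ, hmatch⟩
  obtain ⟨-, hfeas, hstep⟩ := hτ
  set sN : Tup n m nδ nz := τ (N' + 1) with hsN
  set τ' : ℕ → Tup n m nδ nz := fun t => τ (t + 1) with hτ'def
  set σ' : Fin (N' + 1) → Tup n m nδ nz := shiftAppend σ sN with hσ'def
  have hτ'traj : M.Traj (τ' 0).1 τ' :=
    ⟨rfl, fun t => hfeas (t + 1), fun t => hstep (t + 1)⟩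
  have hmatch' : ∀ k : Fin (N' + 1), τ' (k : ℕ) = σ' k := by
    intro k
    show τ ((k : ℕ) + 1) = shiftAppend σ sN k
    unfold shiftAppend
    split
    · next h => exact hmatch ⟨(k : ℕ) + 1, h⟩
    · next h =>
      have hk := k.isLt
      have : (k : ℕ) + 1 = N' + 1 := by omega
      rw [this]
  have hσ'TrajN : M.TrajN (σ' 0).1 σ' := by
    refine ⟨?_, ?_, ?_⟩
    · intro k hk
      have : k = 0 := Fin.ext hk
      rw [this]
    · intro k
      rw [← hmatch' k]; exact hfeas _
    · intro k h
      rw [← hmatch' ⟨k + 1, h⟩, ← hmatch' ⟨k, Nat.lt_of_succ_lt h⟩]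
      exact hstep (k + 1)
  have hQN' : QNstar M C σ' ≤ trajCost C τ' := by
    unfold QNstar
    exact iInf_le
      (fun p : {τ : ℕ → Tup n m nδ nz //
          M.Traj (τ 0).1 τ ∧ ∀ k : Fin (N' + 1), τ (k : ℕ) = σ' k} => trajCost C p.1)
      ⟨τ', hτ'traj, hmatch'⟩
  have hcut' : ∀ i, ENNReal.ofReal (cutFun M C hN (νs i) (cs i) σ') ≤ trajCost C τ' :=
    fun i => (hcuts i _ σ' hσ'TrajN).trans hQN'
  -- decomposition of the infinite-horizon cost
  have hdec : trajCost C τ =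
      ENNReal.ofReal (stageCost C (τ 0).1 (τ 0).2.1) + ENNReal.ofReal C.γ * trajCost C τ' := by
    unfold trajCost
    rw [tsum_eq_zero_add' ENNReal.summable]
    congr 1
    · rw [pow_zero, one_mul]
    · rw [← ENNReal.tsum_mul_left]
      refine tsum_congr fun t => ?_
      rw [← ENNReal.ofReal_mul hγ0.le]
      congr 1
      simp only [hτ'def]
      ring
  -- last states
  have h2 : τ N' = σ ⟨N', Nat.lt_succ_self N'⟩ := hmatch ⟨N', Nat.lt_succ_self N'⟩
  have hxN : M.lastState hN σ = sN.1 :=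
    ((hstep N').trans (congrArg M.step h2)).symm
  have hlast : M.lastState hN σ' = M.step sN := by
    have h1 : σ' ⟨N' + 1 - 1, Nat.sub_lt hN one_pos⟩ = sN := by
      show shiftAppend σ sN ⟨N' + 1 - 1, Nat.sub_lt hN one_pos⟩ = sN
      unfold shiftAppend
      split
      · next h => exact absurd h (by simp)
      · rfl
    show M.step (σ' ⟨N' + 1 - 1, Nat.sub_lt hN one_pos⟩) = M.step sN
    rw [h1]
  -- key finite-sum identity
  have hτ0 : τ 0 = σ 0 := hmatch 0
  have hsum : (∑ t : Fin (N' + 1), C.γ ^ (t : ℕ) * stageCost C (σ t).1 (σ t).2.1)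
      + C.γ ^ (N' + 1) * stageCost C sN.1 sN.2.1
      = stageCost C (τ 0).1 (τ 0).2.1
      + C.γ * ∑ t : Fin (N' + 1), C.γ ^ (t : ℕ) * stageCost C (σ' t).1 (σ' t).2.1 := by
    have hlastterm : σ' (Fin.last N') = sN := by
      show shiftAppend σ sN (Fin.last N') = sN
      unfold shiftAppend
      split
      · next h => exact absurd h (by simp)
      · rfl
    have hmid : ∀ i : Fin N', σ' (Fin.castSucc i) = σ (Fin.succ i) := by
      intro i
      show shiftAppend σ sN (Fin.castSucc i) = σ (Fin.succ i)
      unfold shiftAppend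
      split
      · next h => exact congrArg σ (Fin.ext (by simp))
      · next h => exact absurd (by simpa using Nat.succ_lt_succ i.isLt) h
    rw [Fin.sum_univ_succ, Fin.sum_univ_castSucc]
    simp only [hlastterm, hmid, hτ0, Fin.val_succ, Fin.val_last, Fin.coe_castSucc,
      Fin.val_zero, pow_zero, one_mul]
    rw [mul_add, Finset.mul_sum]
    simp only [← mul_assoc, ← pow_succ']
    ring
  -- facts about the appended step sN
  have hbin : ∀ j, sN.2.2.1 j = 0 ∨ sN.2.2.1 j = 1 := (hfeas (N' + 1)).1
  have hξ' := hξ sN.1 sN.2.1 sN.2.2.1 sN.2.2.2 hbin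
  have hstep'' : (∑ i, lam i • νs i) ⬝ᵥ
      (M.A.mulVec sN.1 + M.B1.mulVec sN.2.1 + M.B2.mulVec sN.2.2.1 + M.B3.mulVec sN.2.2.2)
      = (∑ i, lam i • νs i) ⬝ᵥ M.step sN := rfl
  rw [hstep''] at hξ'
  have hμE : μ ⬝ᵥ (M.E2.mulVec sN.2.2.1 + M.E3.mulVec sN.2.2.2
      - M.E1.mulVec sN.2.1 - M.E4.mulVec sN.1) ≤ μ ⬝ᵥ M.E5 := by
    have hf := (hfeas (N' + 1)).2
    unfold dotProduct
    refine Finset.sum_le_sum fun j _ => mul_le_mul_of_nonneg_left ?_ (hμ j)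
    have := hf j
    simp only [Pi.add_apply, Pi.sub_apply] at this ⊢
    linarith
  have hsc : C.γ ^ (N' + 1) * stageCost C sN.1 sN.2.1
      = (C.γ ^ (N' + 1) / 2) * ((sN.1 - C.xg) ⬝ᵥ C.Q.mulVec (sN.1 - C.xg))
      + (C.γ ^ (N' + 1) / 2) * ((sN.2.1 - C.ug) ⬝ᵥ C.R.mulVec (sN.2.1 - C.ug)) := by
    unfold stageCost; ring
  -- the main real inequality
  have hdot : (∑ i, lam i • νs i) ⬝ᵥ M.step sN = ∑ i, lam i * (νs i ⬝ᵥ M.step sN) := by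
    simp only [dotProduct, Finset.sum_apply, Pi.smul_apply, smul_eq_mul, Finset.sum_mul,
      Finset.mul_sum]
    rw [Finset.sum_comm]
    exact Finset.sum_congr rfl fun i _ => Finset.sum_congr rfl fun j _ => by ring
  have hexp : ∑ i, lam i * ((∑ t : Fin (N' + 1), C.γ ^ (t : ℕ) * stageCost C (σ' t).1 (σ' t).2.1)
        + νs i ⬝ᵥ M.step sN + cs i)
      = C.γ * (∑ t : Fin (N' + 1), C.γ ^ (t : ℕ) * stageCost C (σ' t).1 (σ' t).2.1)
        + (∑ i, lam i • νs i) ⬝ᵥ M.step sN + ∑ i, lam i * cs i := by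
    calc ∑ i, lam i * ((∑ t : Fin (N' + 1), C.γ ^ (t : ℕ) * stageCost C (σ' t).1 (σ' t).2.1)
            + νs i ⬝ᵥ M.step sN + cs i)
        = (∑ i, lam i) * (∑ t : Fin (N' + 1), C.γ ^ (t : ℕ) * stageCost C (σ' t).1 (σ' t).2.1)
            + (∑ i, lam i * (νs i ⬝ᵥ M.step sN)) + ∑ i, lam i * cs i := by
          rw [Finset.sum_mul, ← Finset.sum_add_distrib, ← Finset.sum_add_distrib]
          exact Finset.sum_congr rfl fun i _ => by ring
      _ = C.γ * (∑ t : Fin (N' + 1), C.γ ^ (t : ℕ) * stageCost C (σ' t).1 (σ' t).2.1)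
            + (∑ i, lam i • νs i) ⬝ᵥ M.step sN + ∑ i, lam i * cs i := by
          rw [hlamsum, ← hdot]
  have hreal : cutFun M C hN ν c' σ ≤ stageCost C (τ 0).1 (τ 0).2.1
      + ∑ i, lam i * cutFun M C hN (νs i) (cs i) σ' := by
    simp only [cutFun, hxN, hlast]
    rw [hexp, hc']
    linarith [hξ', hμE, hsum, hsc]
  calc ENNReal.ofReal (cutFun M C hN ν c' σ)
      ≤ ENNReal.ofReal (stageCost C (τ 0).1 (τ 0).2.1
          + ∑ i, lam i * cutFun M C hN (νs i) (cs i) σ') := ENNReal.ofReal_le_ofReal hreal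
    _ ≤ ENNReal.ofReal (stageCost C (τ 0).1 (τ 0).2.1)
          + ENNReal.ofReal (∑ i, lam i * cutFun M C hN (νs i) (cs i) σ') :=
        ENNReal.ofReal_add_le
    _ ≤ ENNReal.ofReal (stageCost C (τ 0).1 (τ 0).2.1)
          + ∑ i, ENNReal.ofReal (lam i * cutFun M C hN (νs i) (cs i) σ') :=
        add_le_add le_rfl (ofReal_sum_le_aux _ _)
    _ ≤ ENNReal.ofReal (stageCost C (τ 0).1 (τ 0).2.1)
          + ∑ i, ENNReal.ofReal (lam i) * trajCost C τ' := by
        refine add_le_add le_rfl (Finset.sum_le_sum fun i _ => ?_)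
        rw [ENNReal.ofReal_mul (hlam i)]
        exact mul_le_mul_right (hcut' i) _
    _ = ENNReal.ofReal (stageCost C (τ 0).1 (τ 0).2.1)
          + ENNReal.ofReal C.γ * trajCost C τ' := by
        rw [← Finset.sum_mul, ← ENNReal.ofReal_sum_of_nonneg (fun i _ => hlam i), hlamsum]
    _ = trajCost C τ := hdec.symm
end
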